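/- Let P be a locally finite ranked poset with a special matching M, and let u, v ∈ P with u ≤ v. If M(v) ⋗ v and M(u) ⋗ u, then M(u) ≤ M(v). -/
import Mathlib

private lemma lifting_aux {P : Type*} [PartialOrder P] [LocallyFiniteOrder P]
    (M : P → P)
    (hmatch : ∀ v : P, M v ⋖ v ∨ v ⋖ M v)
    (hspecial : ∀ u v : P, u ⋖ v → M u ≠ v → M u ≤ M v) :
    ∀ n (u v : P), (Finset.Icc u v).card = n → u ≤ v →
      v ⋖ M v → u ⋖ M u → M u ≤ M v := by
  intro n
  induction n using Nat.strong_induction_on with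
  | _ n ih =>
    intro u v hn huv hMv hMu
    rcases eq_or_lt_of_le huv with rfl | hlt
    · exact le_rfl
    obtain ⟨w, hcov, hwv⟩ := exists_covBy_le_of_lt hlt
    by_cases hMuw : M u = w
    · exact hMuw ▸ (hwv.trans hMv.le)
    have h1 : M u ≤ M w := hspecial u w hcov hMuw
    rcases hmatch w with hw | hw
    · exact h1.trans (hw.le.trans (hwv.trans hMv.le))
    · have hsub : Finset.Icc w v ⊂ Finset.Icc u v := by
        constructor
        · intro x hx
          simp only [Finset.mem_Icc] at hx ⊢
          exact ⟨hcov.le.trans hx.1, hx.2⟩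
        · intro hsub
          have := hsub (Finset.mem_Icc.mpr ⟨le_rfl, huv⟩)
          simp only [Finset.mem_Icc] at this
          exact absurd this.1 (not_le_of_gt hcov.lt)
          
      have hcard : (Finset.Icc w v).card < n := hn ▸ Finset.card_lt_card hsub
      exact h1.trans (ih _ hcard w v rfl hwv hMv hw)

/-- Lifting property for special matchings of a locally finite ranked poset.
`P` is a locally finite graded poset with minimum and rank function `ρ`;
`M` is a matching of the Hasse diagram of `P` (an involution matching each
element with one covering it or covered by it), and `M` is special:
`u ⋖ v` and `M u ≠ v` imply `M u ≤ M v`. -/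
theorem lifting_property {P : Type*} [PartialOrder P] [LocallyFiniteOrder P] [OrderBot P]
    (ρ : P → ℕ) (hρ_bot : ρ ⊥ = 0) (hρ : ∀ x y : P, x ⋖ y → ρ y = ρ x + 1)
    (M : P → P) (hinv : Function.Involutive M)
    (hmatch : ∀ v : P, M v ⋖ v ∨ v ⋖ M v)
    (hspecial : ∀ u v : P, u ⋖ v → M u ≠ v → M u ≤ M v)
    (u v : P) (huv : u ≤ v)
    (hMv : v ⋖ M v) (hMu : u ⋖ M u) : M u ≤ M v :=
  lifting_aux M hmatch hspecial _ u v rfl huv hMv hMu
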